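/- Let k ≥ 3 and let λ, μ ∈ ℝ satisfy (λ + (k−2)/3)·(μ − (k+1)/3) + (k+1)(k−2)/36 = 0. Set α₂ := (2/3)·k(k−1)(k+3λ−2)², α₁ := 2(k−1)(k+3λ−2)(2−2λ−k), α₀ := 3k² + 12λk + 12λ² − 11k − 24λ + 10. Let X, a_0, …, a_k : ℝ → ℝ be smooth, and let b_0, …, b_k : ℝ → ℝ be smooth functions such that Σ_{i=0}^{k} b_i·φ^{(i)} = L_X^μ( Σ_{i=0}^{k} a_i·φ^{(i)} ) − Σ_{i=0}^{k} a_i·(L_X^λ φ)^{(i)} for every smooth φ : ℝ → ℝ. Then α₂·b_k'' + α₁·b_{k−1}' + α₀·b_{k−2} = L_X^{μ−λ−k+2}( α₂·a_k'' + α₁·a_{k−1}' + α₀·a_{k−2} ). (That is, the map W(A) = α₂·a_k'' + α₁·a_{k−1}' + α₀·a_{k−2}, a second-order analogue of the principal symbol with values in densities of weight μ − λ − k + 2, is equivariant under the action of vector fields.) -/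

import Mathlib

open Finset
open scoped ContDiff

/-- Lie derivative of a `lam`-density `φ` along the vector field `X`:
`L_X^lam φ = X·φ' + lam·X'·φ`. -/
noncomputable def lieDeriv (lam : ℝ) (X φ : ℝ → ℝ) : ℝ → ℝ :=
  fun x => X x * deriv φ x + lam * deriv X x * φ x

lemma smooth_deriv {f : ℝ → ℝ} (hf : ContDiff ℝ ∞ f) : ContDiff ℝ ∞ (deriv f) :=
  (contDiff_infty_iff_deriv.mp hf).2

lemma hasD {f : ℝ → ℝ} (hf : ContDiff ℝ ∞ f) (x : ℝ) : HasDerivAt f (deriv f x) x :=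
  (hf.differentiable (by norm_num) x).hasDerivAt

lemma itd_add {f g : ℝ → ℝ} (hf : ContDiff ℝ ∞ f) (hg : ContDiff ℝ ∞ g) (n : ℕ) (x : ℝ) :
    iteratedDeriv n (fun y => f y + g y) x = iteratedDeriv n f x + iteratedDeriv n g x := by
  rw [← iteratedDerivWithin_univ, ← iteratedDerivWithin_univ, ← iteratedDerivWithin_univ]
  exact iteratedDerivWithin_add (Set.mem_univ x) uniqueDiffOn_univ
    (hf.contDiffWithinAt.of_le (by exact_mod_cast le_top)) (hg.contDiffWithinAt.of_le (by exact_mod_cast le_top))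

lemma itd_cmul {f : ℝ → ℝ} (hf : ContDiff ℝ ∞ f) (c : ℝ) (n : ℕ) (x : ℝ) :
    iteratedDeriv n (fun y => c * f y) x = c * iteratedDeriv n f x := by
  rw [← iteratedDerivWithin_univ, ← iteratedDerivWithin_univ]
  exact iteratedDerivWithin_const_mul (Set.mem_univ x) uniqueDiffOn_univ c
    (hf.contDiffWithinAt.of_le (by exact_mod_cast le_top))

lemma hasDerivAt_pow_sub (p : ℕ) (c y : ℝ) :
    HasDerivAt (fun y : ℝ => (y - c)^p) ((p : ℝ) * (y - c)^(p - 1)) y := by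
  simpa using ((hasDerivAt_id y).sub_const c).fun_pow p

lemma L1 (m : ℕ) (c : ℝ) : ∀ i : ℕ, iteratedDeriv i (fun y => (y - c)^m)
    = fun y => (m.descFactorial i : ℝ) * (y - c)^(m - i) := by
  intro i
  induction i with
  | zero => simp [iteratedDeriv_zero]
  | succ n ih =>
    rw [iteratedDeriv_succ, ih]
    funext y
    have h : HasDerivAt (fun y : ℝ => (m.descFactorial n : ℝ) * (y - c)^(m - n))
        ((m.descFactorial n : ℝ) * (((m - n : ℕ) : ℝ) * (y - c)^(m - n - 1))) y :=
      (hasDerivAt_pow_sub (m - n) c y).const_mul _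
    rw [h.deriv, Nat.descFactorial_succ, Nat.sub_sub]
    push_cast
    ring

lemma L2 : ∀ (n : ℕ) {g : ℝ → ℝ}, ContDiff ℝ ∞ g → ∀ (p : ℕ) (c : ℝ),
    iteratedDeriv n (fun y => g y * (y - c)^p) c
      = (n.choose p : ℝ) * (p.factorial : ℝ) * iteratedDeriv (n - p) g c := by
  intro n
  induction n with
  | zero =>
    intro g hg p c
    cases p with
    | zero => simp [iteratedDeriv_zero]
    | succ q => simp [iteratedDeriv_zero]
  | succ n ih =>
    intro g hg p c
    cases p with
    | zero => simp only [pow_zero, mul_one, Nat.choose_zero_right, Nat.factorial_zero,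
        Nat.cast_one, Nat.sub_zero, one_mul]
    | succ q =>
      rw [iteratedDeriv_succ']
      have hderiv : (deriv fun y => g y * (y - c)^(q+1))
          = fun y => deriv g y * (y - c)^(q+1) + ((q:ℝ)+1) * (g y * (y - c)^q) := by
        funext y
        have h1 : HasDerivAt (fun y => g y * (y - c)^(q+1))
            (deriv g y * (y - c)^(q+1) + g y * (((q+1 : ℕ):ℝ) * (y - c)^(q+1-1))) y :=
          (hasD hg y).mul (hasDerivAt_pow_sub (q+1) c y)
        rw [h1.deriv]; push_cast; ring
      rw [hderiv]
      have hpow : ∀ r : ℕ, ContDiff ℝ ∞ (fun y : ℝ => (y - c)^r) := fun r =>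
        (contDiff_id.sub contDiff_const).pow r
      have hsm1 : ContDiff ℝ ∞ (fun y => deriv g y * (y - c)^(q+1)) :=
        (smooth_deriv hg).mul (hpow (q+1))
      have hsm2 : ContDiff ℝ ∞ (fun y => g y * (y - c)^q) := hg.mul (hpow q)
      rw [itd_add hsm1 (contDiff_const.mul hsm2) n c, itd_cmul hsm2 _ n c,
        ih (smooth_deriv hg) (q+1) c, ih hg q c]
      rcases le_or_gt (q+1) n with h | h
      · have e2 : iteratedDeriv (n - (q+1)) (deriv g) c = iteratedDeriv (n - q) g c := by
          rw [show n - q = (n - (q+1)) + 1 by omega, iteratedDeriv_succ']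
        rw [e2, show n + 1 - (q+1) = n - q by omega, Nat.choose_succ_succ, Nat.factorial_succ]
        push_cast; ring
      · rw [Nat.choose_eq_zero_of_lt h, show n + 1 - (q+1) = n - q by omega,
          Nat.choose_succ_succ, Nat.choose_eq_zero_of_lt h, Nat.factorial_succ]
        push_cast; ring

lemma extract (lam μ : ℝ) (k : ℕ) (X : ℝ → ℝ) (a b : ℕ → ℝ → ℝ)
    (hX : ContDiff ℝ ∞ X) (ha : ∀ i, ContDiff ℝ ∞ (a i))
    (hb : ∀ φ : ℝ → ℝ, ContDiff ℝ (⊤ : ℕ∞) φ →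
      (fun x => ∑ i ∈ Finset.range (k+1), b i x * iteratedDeriv i φ x)
        = fun x =>
            lieDeriv μ X (fun y => ∑ i ∈ Finset.range (k+1), a i y * iteratedDeriv i φ y) x
              - ∑ i ∈ Finset.range (k+1), a i x * iteratedDeriv i (lieDeriv lam X φ) x)
    (m : ℕ) (hm1 : 1 ≤ m) (hmk : m ≤ k) (x : ℝ) :
    (m.factorial : ℝ) * b m x
      = (m.factorial : ℝ) * (X x * (deriv (a m) x + a (m-1) x) + μ * deriv X x * a m x)
        - ∑ i ∈ Finset.range (k+1), a i x *
            ((m : ℝ) * (i.choose (m-1) : ℝ) * ((m-1).factorial : ℝ)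
                * iteratedDeriv (i-(m-1)) X x
             + lam * (i.choose m : ℝ) * (m.factorial : ℝ)
                * iteratedDeriv (i-m) (deriv X) x) := by
  obtain ⟨m', rfl⟩ : ∃ m', m = m' + 1 := ⟨m - 1, by omega⟩
  simp only [Nat.add_sub_cancel]
  set m := m' + 1 with hm
  have hφ : ContDiff ℝ (⊤ : ℕ∞) (fun y : ℝ => (y - x)^m) := (contDiff_id.sub contDiff_const).pow m
  have h := congrFun (hb _ hφ) x
  -- values of iterated derivatives of φ at x
  have hval : ∀ i, iteratedDeriv i (fun y : ℝ => (y - x)^m) x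
      = (m.descFactorial i : ℝ) * (0:ℝ)^(m - i) := by
    intro i; rw [L1 m x i]; simp
  have key : ∀ c : ℕ → ℝ, ∑ i ∈ Finset.range (k+1), c i * iteratedDeriv i (fun y : ℝ => (y - x)^m) x
      = c m * (m.factorial : ℝ) := by
    intro c
    rw [Finset.sum_eq_single m]
    · rw [hval m, Nat.sub_self, pow_zero, Nat.descFactorial_self, mul_one]
    · intro i _ hne
      rw [hval i]
      rcases lt_or_gt_of_ne hne with hlt | hgt
      · rw [zero_pow (by omega), mul_zero, mul_zero]
      · rw [Nat.descFactorial_eq_zero_iff_lt.mpr hgt]; simp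
    · intro hnm; exact absurd (Finset.mem_range.mpr (by omega)) hnm
  -- derivative of the a-sum at x
  have hterm : ∀ i : ℕ, HasDerivAt
      (fun y => a i y * ((m.descFactorial i : ℝ) * (y - x)^(m - i)))
      (deriv (a i) x * ((m.descFactorial i : ℝ) * (0:ℝ)^(m - i))
        + a i x * ((m.descFactorial i : ℝ) * (((m - i : ℕ):ℝ) * (0:ℝ)^(m - i - 1)))) x := by
    intro i
    have := (hasD (ha i) x).fun_mul ((hasDerivAt_pow_sub (m - i) x x).const_mul
      (m.descFactorial i : ℝ))
    simpa using this
  have hF : deriv (fun y => ∑ i ∈ Finset.range (k+1),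
        a i y * iteratedDeriv i (fun y : ℝ => (y - x)^m) y) x
      = deriv (a m) x * (m.factorial : ℝ) + a m' x * (m.factorial : ℝ) := by
    have e1 : (fun y => ∑ i ∈ Finset.range (k+1),
          a i y * iteratedDeriv i (fun y : ℝ => (y - x)^m) y)
        = fun y => ∑ i ∈ Finset.range (k+1),
            a i y * ((m.descFactorial i : ℝ) * (y - x)^(m - i)) := by
      funext y
      refine Finset.sum_congr rfl fun i _ => ?_
      rw [L1 m x i]
    rw [e1, deriv_fun_sum (fun i _ => (hterm i).differentiableAt)]
    rw [Finset.sum_congr rfl fun i _ => (hterm i).deriv]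
    rw [Finset.sum_add_distrib]
    congr 1
    · rw [Finset.sum_eq_single m]
      · rw [Nat.sub_self, pow_zero, Nat.descFactorial_self, mul_one]
      · intro i _ hne
        rcases lt_or_gt_of_ne hne with hlt | hgt
        · rw [zero_pow (by omega), mul_zero, mul_zero]
        · rw [Nat.descFactorial_eq_zero_iff_lt.mpr hgt]; simp
      · intro hnm; exact absurd (Finset.mem_range.mpr (by omega)) hnm
    · rw [Finset.sum_eq_single m']
      · have : m - m' = 1 := by omega
        rw [this]
        have hdf : (m.descFactorial m' : ℝ) = (m.factorial : ℝ) := by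
          rw [show m.factorial = m.descFactorial m from (Nat.descFactorial_self m).symm, hm,
            Nat.descFactorial_succ]
          push_cast
          rw [Nat.add_sub_cancel_left]
          ring
        simp [hdf]
      · intro i _ hne
        rcases lt_or_gt_of_ne hne with hlt | hgt
        · rw [zero_pow (by omega)]; simp
        · rw [show m - i = 0 by omega]; simp
      · intro hnm; exact absurd (Finset.mem_range.mpr (by omega)) hnm
  -- the lie derivative of φ
  have hlie : lieDeriv lam X (fun y : ℝ => (y - x)^m)
      = fun y => (m:ℝ) * (X y * (y - x)^(m-1)) + lam * (deriv X y * (y - x)^m) := by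
    funext y
    show X y * deriv (fun y : ℝ => (y - x)^m) y + lam * deriv X y * (y - x)^m = _
    have : deriv (fun y : ℝ => (y - x)^m) y = (m : ℝ) * (y - x)^(m-1) := by
      rw [← iteratedDeriv_one, L1 m x 1, Nat.descFactorial_one]
    rw [this]; ring
  have hpow : ∀ r : ℕ, ContDiff ℝ ∞ (fun y : ℝ => (y - x)^r) := fun r =>
    (contDiff_id.sub contDiff_const).pow r
  have hterm2 : ∀ i, iteratedDeriv i (lieDeriv lam X (fun y : ℝ => (y - x)^m)) x
      = (m:ℝ) * ((i.choose m' : ℝ) * (m'.factorial : ℝ) * iteratedDeriv (i - m') X x)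
        + lam * ((i.choose m : ℝ) * (m.factorial : ℝ) * iteratedDeriv (i - m) (deriv X) x) := by
    intro i
    rw [hlie]
    have hA : ContDiff ℝ ∞ (fun y => X y * (y - x)^(m-1)) := hX.mul (hpow (m-1))
    have hB : ContDiff ℝ ∞ (fun y => deriv X y * (y - x)^m) := (smooth_deriv hX).mul (hpow m)
    rw [itd_add (contDiff_const.mul hA) (contDiff_const.mul hB) i x,
      itd_cmul hA _ i x, itd_cmul hB _ i x,
      L2 i hX (m-1) x, L2 i (smooth_deriv hX) m x]
    norm_num
    exact Or.inl rfl
  -- assemble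
  have hkb : ∑ i ∈ Finset.range (k+1), b i x * iteratedDeriv i (fun y : ℝ => (y - x)^m) x
      = b m x * (m.factorial : ℝ) := key fun i => b i x
  have hka : ∑ i ∈ Finset.range (k+1), a i x * iteratedDeriv i (fun y : ℝ => (y - x)^m) x
      = a m x * (m.factorial : ℝ) := key fun i => a i x
  rw [hkb] at h
  simp only [lieDeriv] at h
  rw [hF, hka] at h
  rw [Finset.sum_congr rfl (fun i _ => by rw [hterm2 i] : ∀ i ∈ Finset.range (k+1), _)] at h
  have hsg : ∑ i ∈ Finset.range (k+1), a i x *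
      ((m:ℝ) * ((i.choose m' : ℝ) * (m'.factorial : ℝ) * iteratedDeriv (i - m') X x)
        + lam * ((i.choose m : ℝ) * (m.factorial : ℝ) * iteratedDeriv (i - m) (deriv X) x))
      = ∑ i ∈ Finset.range (k+1), a i x *
      ((m : ℝ) * (i.choose m' : ℝ) * (m'.factorial : ℝ) * iteratedDeriv (i - m') X x
        + lam * (i.choose m : ℝ) * (m.factorial : ℝ) * iteratedDeriv (i - m) (deriv X) x) :=
    Finset.sum_congr rfl fun i _ => by ring
  rw [hsg] at h
  linear_combination h

lemma itd2 (f : ℝ → ℝ) : iteratedDeriv 2 f = deriv (deriv f) := by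
  rw [show (2:ℕ) = 1+1 from rfl, iteratedDeriv_succ, iteratedDeriv_one]

lemma itd3 (f : ℝ → ℝ) : iteratedDeriv 3 f = deriv (deriv (deriv f)) := by
  rw [show (3:ℕ) = 2+1 from rfl, iteratedDeriv_succ, itd2]

lemma sum_split3 (f : ℕ → ℝ) (n : ℕ) :
    ∑ i ∈ Finset.range (n+3+1), f i
      = (∑ i ∈ Finset.range (n+2), f i) + f (n+2) + f (n+3) := by
  rw [show n+3+1 = (n+2)+1+1 from rfl, Finset.sum_range_succ, Finset.sum_range_succ]

lemma sum_split4 (f : ℕ → ℝ) (n : ℕ) :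
    ∑ i ∈ Finset.range (n+3+1), f i
      = (((∑ i ∈ Finset.range (n+1), f i) + f (n+1)) + f (n+2)) + f (n+3) := by
  rw [show n+3+1 = (n+1)+1+1+1 from rfl, Finset.sum_range_succ, Finset.sum_range_succ,
    Finset.sum_range_succ]

lemma cast_c2 (n : ℕ) : (((n+3).choose (n+1) : ℕ) : ℝ) = ((n:ℝ)+3)*((n:ℝ)+2)/2 := by
  rw [show n+1 = n+3-2 from by omega, Nat.choose_symm (by omega), Nat.cast_choose_two]
  push_cast; ring

lemma cast_c5 (n : ℕ) : (((n+2).choose n : ℕ) : ℝ) = ((n:ℝ)+2)*((n:ℝ)+1)/2 := by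
  have e : (n+2).choose n = (n+2).choose 2 := by
    rw [← Nat.choose_symm (show 2 ≤ n+2 by omega)]; congr 1 <;> omega
  rw [e, Nat.cast_choose_two]
  push_cast; ring

lemma cast_c3 (n : ℕ) : (((n+3).choose n : ℕ) : ℝ) = ((n:ℝ)+3)*((n:ℝ)+2)*((n:ℝ)+1)/6 := by
  have e : (n+3).choose n = (n+3).choose 3 := by
    rw [← Nat.choose_symm (show 3 ≤ n+3 by omega)]; congr 1 <;> omega
  rw [e, Nat.cast_choose ℝ (by omega)]
  rw [show n+3-3 = n from by omega]
  have h3 : ((3:ℕ).factorial : ℝ) = 6 := by norm_num [Nat.factorial]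
  have hf : ((n+3).factorial : ℝ) = ((n:ℝ)+3)*((n:ℝ)+2)*((n:ℝ)+1)*(n.factorial : ℝ) := by
    rw [show n+3 = n+2+1 from rfl, Nat.factorial_succ, show n+2 = n+1+1 from rfl,
      Nat.factorial_succ, Nat.factorial_succ]
    push_cast; ring
  rw [h3, hf]
  have hnf : (n.factorial : ℝ) ≠ 0 := Nat.cast_ne_zero.mpr (Nat.factorial_ne_zero n)
  field_simp

section Formulas

variable (lam μ : ℝ) (n : ℕ) (X : ℝ → ℝ) (a b : ℕ → ℝ → ℝ)

lemma bk_formula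
    (hX : ContDiff ℝ ∞ X) (ha : ∀ i, ContDiff ℝ ∞ (a i))
    (hb : ∀ φ : ℝ → ℝ, ContDiff ℝ (⊤ : ℕ∞) φ →
      (fun x => ∑ i ∈ Finset.range ((n+3)+1), b i x * iteratedDeriv i φ x)
        = fun x =>
            lieDeriv μ X (fun y => ∑ i ∈ Finset.range ((n+3)+1), a i y * iteratedDeriv i φ y) x
              - ∑ i ∈ Finset.range ((n+3)+1), a i x * iteratedDeriv i (lieDeriv lam X φ) x)
    (x : ℝ) :
    b (n+3) x = X x * deriv (a (n+3)) x
      + (μ - lam - ((n:ℝ)+3)) * deriv X x * a (n+3) x := by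
  have h := extract lam μ (n+3) X a b hX ha hb (n+3) (by omega) (by omega) x
  rw [show n+3-1 = n+2 from rfl] at h
  rw [sum_split3] at h
  rw [Finset.sum_eq_zero (fun i hi => by
    have hi' := Finset.mem_range.mp hi
    rw [Nat.choose_eq_zero_of_lt (by omega), Nat.choose_eq_zero_of_lt (by omega)]
    push_cast; ring)] at h
  rw [show n+2-(n+2) = 0 from by omega, show n+3-(n+2) = 1 from by omega,
    show n+3-(n+3) = 0 from by omega,
    Nat.choose_eq_zero_of_lt (show n+2 < n+3 by omega),
    Nat.choose_self, Nat.choose_self, Nat.choose_succ_self_right, iteratedDeriv_zero, iteratedDeriv_zero,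
    iteratedDeriv_one] at h
  have hfac : (((n+3).factorial : ℕ) : ℝ) ≠ 0 := Nat.cast_ne_zero.mpr (Nat.factorial_ne_zero _)
  refine mul_left_cancel₀ hfac ?_
  rw [show n+3 = n+2+1 from rfl, Nat.factorial_succ] at h ⊢
  push_cast at h ⊢
  linear_combination h

lemma bk1_formula
    (hX : ContDiff ℝ ∞ X) (ha : ∀ i, ContDiff ℝ ∞ (a i))
    (hb : ∀ φ : ℝ → ℝ, ContDiff ℝ (⊤ : ℕ∞) φ →
      (fun x => ∑ i ∈ Finset.range ((n+3)+1), b i x * iteratedDeriv i φ x)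
        = fun x =>
            lieDeriv μ X (fun y => ∑ i ∈ Finset.range ((n+3)+1), a i y * iteratedDeriv i φ y) x
              - ∑ i ∈ Finset.range ((n+3)+1), a i x * iteratedDeriv i (lieDeriv lam X φ) x)
    (x : ℝ) :
    b (n+2) x = X x * deriv (a (n+2)) x
      + (μ - lam - (n:ℝ) - 2) * deriv X x * a (n+2) x
      - (((n:ℝ)+3)*((n:ℝ)+2)/2 + lam*((n:ℝ)+3)) * deriv (deriv X) x * a (n+3) x := by
  have h := extract lam μ (n+3) X a b hX ha hb (n+2) (by omega) (by omega) x
  rw [show n+2-1 = n+1 from rfl] at h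
  rw [sum_split4] at h
  rw [Finset.sum_eq_zero (fun i hi => by
    have hi' := Finset.mem_range.mp hi
    rw [Nat.choose_eq_zero_of_lt (by omega), Nat.choose_eq_zero_of_lt (by omega)]
    push_cast; ring)] at h
  rw [show n+1-(n+1) = 0 from by omega, show n+2-(n+1) = 1 from by omega,
    show n+3-(n+1) = 2 from by omega, show n+2-(n+2) = 0 from by omega,
    show n+3-(n+2) = 1 from by omega,
    Nat.choose_eq_zero_of_lt (show n+1 < n+2 by omega),
    Nat.choose_self, Nat.choose_self, Nat.choose_succ_self_right, Nat.choose_succ_self_right,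
    cast_c2 n, itd2 X, iteratedDeriv_zero, iteratedDeriv_zero, iteratedDeriv_one,
    iteratedDeriv_one] at h
  have hfac : (((n+2).factorial : ℕ) : ℝ) ≠ 0 := Nat.cast_ne_zero.mpr (Nat.factorial_ne_zero _)
  refine mul_left_cancel₀ hfac ?_
  rw [show n+2 = n+1+1 from rfl, Nat.factorial_succ] at h ⊢
  push_cast at h ⊢
  linear_combination h

lemma bk2_formula
    (hX : ContDiff ℝ ∞ X) (ha : ∀ i, ContDiff ℝ ∞ (a i))
    (hb : ∀ φ : ℝ → ℝ, ContDiff ℝ (⊤ : ℕ∞) φ →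
      (fun x => ∑ i ∈ Finset.range ((n+3)+1), b i x * iteratedDeriv i φ x)
        = fun x =>
            lieDeriv μ X (fun y => ∑ i ∈ Finset.range ((n+3)+1), a i y * iteratedDeriv i φ y) x
              - ∑ i ∈ Finset.range ((n+3)+1), a i x * iteratedDeriv i (lieDeriv lam X φ) x)
    (x : ℝ) :
    b (n+1) x = X x * deriv (a (n+1)) x
      + (μ - lam - (n:ℝ) - 1) * deriv X x * a (n+1) x
      - (((n:ℝ)+2)*((n:ℝ)+1)/2 + lam*((n:ℝ)+2)) * deriv (deriv X) x * a (n+2) x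
      - (((n:ℝ)+3)*((n:ℝ)+2)*((n:ℝ)+1)/6 + lam*((n:ℝ)+3)*((n:ℝ)+2)/2)
          * deriv (deriv (deriv X)) x * a (n+3) x := by
  have h := extract lam μ (n+3) X a b hX ha hb (n+1) (by omega) (by omega) x
  rw [show n+1-1 = n from rfl] at h
  rw [sum_split4, Finset.sum_range_succ] at h
  rw [Finset.sum_eq_zero (fun i hi => by
    have hi' := Finset.mem_range.mp hi
    rw [Nat.choose_eq_zero_of_lt (by omega), Nat.choose_eq_zero_of_lt (by omega)]
    push_cast; ring)] at h
  rw [show n-n = 0 from by omega, show n+1-n = 1 from by omega,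
    show n+2-n = 2 from by omega, show n+3-n = 3 from by omega,
    show n+1-(n+1) = 0 from by omega, show n+2-(n+1) = 1 from by omega,
    show n+3-(n+1) = 2 from by omega,
    Nat.choose_eq_zero_of_lt (show n < n+1 by omega),
    Nat.choose_self, Nat.choose_self, Nat.choose_succ_self_right, Nat.choose_succ_self_right,
    cast_c5 n, cast_c3 n, cast_c2 n, itd2 X, itd3 X, itd2 (deriv X),
    iteratedDeriv_zero, iteratedDeriv_zero, iteratedDeriv_one, iteratedDeriv_one] at h
  have hfac : (((n+1).factorial : ℕ) : ℝ) ≠ 0 := Nat.cast_ne_zero.mpr (Nat.factorial_ne_zero _)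
  refine mul_left_cancel₀ hfac ?_
  rw [Nat.factorial_succ] at h ⊢
  push_cast at h ⊢
  linear_combination h

end Formulas

/-- For `k ≥ 3` and weights satisfying `(λ+(k−2)/3)(μ−(k+1)/3) + (k+1)(k−2)/36 = 0`, the
second-order analogue of the principal symbol `W(A) = α₂·a_k'' + α₁·a_{k−1}' + α₀·a_{k−2}`,
with values in densities of weight `μ − λ − k + 2`, is equivariant under vector fields. -/
theorem W_equivariant (lam μ : ℝ) (k : ℕ) (hk : 3 ≤ k)
    (hrel : (lam + ((k : ℝ) - 2)/3) * (μ - ((k : ℝ) + 1)/3) + ((k : ℝ) + 1) * ((k : ℝ) - 2)/36 = 0)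
    (X : ℝ → ℝ) (a b : ℕ → ℝ → ℝ)
    (hX : ContDiff ℝ (⊤ : ℕ∞) X)
    (ha : ∀ i, ContDiff ℝ (⊤ : ℕ∞) (a i)) (hbsmooth : ∀ i, ContDiff ℝ (⊤ : ℕ∞) (b i))
    (hb : ∀ φ : ℝ → ℝ, ContDiff ℝ (⊤ : ℕ∞) φ →
      (fun x => ∑ i ∈ Finset.range (k+1), b i x * iteratedDeriv i φ x)
        = fun x =>
            lieDeriv μ X (fun y => ∑ i ∈ Finset.range (k+1), a i y * iteratedDeriv i φ y) x
              - ∑ i ∈ Finset.range (k+1), a i x * iteratedDeriv i (lieDeriv lam X φ) x) :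
    (fun x =>
        (2/3 * k * ((k : ℝ) - 1) * ((k : ℝ) + 3 * lam - 2)^2) * iteratedDeriv 2 (b k) x
          + (2 * ((k : ℝ) - 1) * ((k : ℝ) + 3 * lam - 2) * (2 - 2 * lam - (k : ℝ)))
              * deriv (b (k-1)) x
          + (3 * (k : ℝ)^2 + 12 * lam * k + 12 * lam^2 - 11 * k - 24 * lam + 10) * b (k-2) x)
      = lieDeriv (μ - lam - (k : ℝ) + 2) X
          (fun x =>
            (2/3 * k * ((k : ℝ) - 1) * ((k : ℝ) + 3 * lam - 2)^2) * iteratedDeriv 2 (a k) x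
              + (2 * ((k : ℝ) - 1) * ((k : ℝ) + 3 * lam - 2) * (2 - 2 * lam - (k : ℝ)))
                  * deriv (a (k-1)) x
              + (3 * (k : ℝ)^2 + 12 * lam * k + 12 * lam^2 - 11 * k - 24 * lam + 10)
                  * a (k-2) x) := by
  obtain ⟨n, rfl⟩ : ∃ n, k = n + 3 := ⟨k - 3, by omega⟩
  simp only [show n+3-1 = n+2 from rfl, show n+3-2 = n+1 from rfl]
  have hX' : ContDiff ℝ ∞ X := hX.of_le (by simp)
  have ha' : ∀ i, ContDiff ℝ ∞ (a i) := fun i => (ha i).of_le (by simp)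
  have hX1 := smooth_deriv hX'
  have hX2 := smooth_deriv hX1
  have hA := ha' (n+3)
  have hB := ha' (n+2)
  have hC := ha' (n+1)
  have hA1 := smooth_deriv hA
  have hA2 := smooth_deriv hA1
  have hB1 := smooth_deriv hB
  have hbkf : b (n+3) = fun x => X x * deriv (a (n+3)) x
      + (μ - lam - ((n:ℝ)+3)) * deriv X x * a (n+3) x :=
    funext (bk_formula lam μ n X a b hX' ha' hb)
  have hbk1f : b (n+2) = fun x => X x * deriv (a (n+2)) x
      + (μ - lam - (n:ℝ) - 2) * deriv X x * a (n+2) x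
      - (((n:ℝ)+3)*((n:ℝ)+2)/2 + lam*((n:ℝ)+3)) * deriv (deriv X) x * a (n+3) x :=
    funext (bk1_formula lam μ n X a b hX' ha' hb)
  have hbk2 := bk2_formula lam μ n X a b hX' ha' hb
  have hdbk : ∀ x, HasDerivAt (b (n+3))
      (deriv X x * deriv (a (n+3)) x + X x * deriv (deriv (a (n+3))) x
        + (((μ - lam - ((n:ℝ)+3)) * deriv (deriv X) x) * a (n+3) x
           + ((μ - lam - ((n:ℝ)+3)) * deriv X x) * deriv (a (n+3)) x)) x := by
    intro x
    rw [hbkf]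
    exact ((hasD hX' x).mul (hasD hA1 x)).add
      (((hasD hX1 x).const_mul _).mul (hasD hA x))
  have hdbkf : deriv (b (n+3)) = fun x =>
      deriv X x * deriv (a (n+3)) x + X x * deriv (deriv (a (n+3))) x
        + (((μ - lam - ((n:ℝ)+3)) * deriv (deriv X) x) * a (n+3) x
           + ((μ - lam - ((n:ℝ)+3)) * deriv X x) * deriv (a (n+3)) x) :=
    funext fun x => (hdbk x).deriv
  have hddbk : ∀ x, HasDerivAt (fun x =>
      deriv X x * deriv (a (n+3)) x + X x * deriv (deriv (a (n+3))) x
        + (((μ - lam - ((n:ℝ)+3)) * deriv (deriv X) x) * a (n+3) x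
           + ((μ - lam - ((n:ℝ)+3)) * deriv X x) * deriv (a (n+3)) x))
      (((deriv (deriv X) x * deriv (a (n+3)) x + deriv X x * deriv (deriv (a (n+3))) x)
        + (deriv X x * deriv (deriv (a (n+3))) x + X x * deriv (deriv (deriv (a (n+3)))) x))
       + ((((μ - lam - ((n:ℝ)+3)) * deriv (deriv (deriv X)) x) * a (n+3) x
            + ((μ - lam - ((n:ℝ)+3)) * deriv (deriv X) x) * deriv (a (n+3)) x)
          + (((μ - lam - ((n:ℝ)+3)) * deriv (deriv X) x) * deriv (a (n+3)) x
            + ((μ - lam - ((n:ℝ)+3)) * deriv X x) * deriv (deriv (a (n+3))) x))) x := by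
    intro x
    exact (((hasD hX1 x).mul (hasD hA1 x)).add ((hasD hX' x).mul (hasD hA2 x))).add
      (((((hasD hX2 x).const_mul _).mul (hasD hA x))).add
        (((hasD hX1 x).const_mul _).mul (hasD hA1 x)))
  have hdbk1 : ∀ x, HasDerivAt (b (n+2))
      ((deriv X x * deriv (a (n+2)) x + X x * deriv (deriv (a (n+2))) x
        + (((μ - lam - (n:ℝ) - 2) * deriv (deriv X) x) * a (n+2) x
           + ((μ - lam - (n:ℝ) - 2) * deriv X x) * deriv (a (n+2)) x))
       - (((((n:ℝ)+3)*((n:ℝ)+2)/2 + lam*((n:ℝ)+3)) * deriv (deriv (deriv X)) x) * a (n+3) x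
          + ((((n:ℝ)+3)*((n:ℝ)+2)/2 + lam*((n:ℝ)+3)) * deriv (deriv X) x) * deriv (a (n+3)) x)) x := by
    intro x
    rw [hbk1f]
    exact (((hasD hX' x).mul (hasD hB1 x)).add
      (((hasD hX1 x).const_mul _).mul (hasD hB x))).sub
      (((hasD hX2 x).const_mul _).mul (hasD hA x))
  have hdW : ∀ x, HasDerivAt (fun x =>
      (2/3 * ((n+3 : ℕ) : ℝ) * (((n+3 : ℕ) : ℝ) - 1) * (((n+3 : ℕ) : ℝ) + 3 * lam - 2)^2)
          * deriv (deriv (a (n+3))) x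
        + (2 * (((n+3 : ℕ) : ℝ) - 1) * (((n+3 : ℕ) : ℝ) + 3 * lam - 2)
            * (2 - 2 * lam - ((n+3 : ℕ) : ℝ))) * deriv (a (n+2)) x
        + (3 * ((n+3 : ℕ) : ℝ)^2 + 12 * lam * ((n+3 : ℕ) : ℝ) + 12 * lam^2
            - 11 * ((n+3 : ℕ) : ℝ) - 24 * lam + 10) * a (n+1) x)
      ((2/3 * ((n+3 : ℕ) : ℝ) * (((n+3 : ℕ) : ℝ) - 1) * (((n+3 : ℕ) : ℝ) + 3 * lam - 2)^2)
          * deriv (deriv (deriv (a (n+3)))) x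
        + (2 * (((n+3 : ℕ) : ℝ) - 1) * (((n+3 : ℕ) : ℝ) + 3 * lam - 2)
            * (2 - 2 * lam - ((n+3 : ℕ) : ℝ))) * deriv (deriv (a (n+2))) x
        + (3 * ((n+3 : ℕ) : ℝ)^2 + 12 * lam * ((n+3 : ℕ) : ℝ) + 12 * lam^2
            - 11 * ((n+3 : ℕ) : ℝ) - 24 * lam + 10) * deriv (a (n+1)) x) x := by
    intro x
    exact (((hasD hA2 x).const_mul _).add ((hasD hB1 x).const_mul _)).add
      ((hasD hC x).const_mul _)
  funext x
  simp only [lieDeriv, itd2]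
  rw [hdbkf, (hddbk x).deriv, (hdbk1 x).deriv, hbk2 x, (hdW x).deriv]
  push_cast
  push_cast at hrel
  linear_combination
    ((2*((n:ℝ)+3)*((n:ℝ)+2)*((n:ℝ)+1) + 6*lam*((n:ℝ)+3)*((n:ℝ)+2))
        * deriv (deriv (deriv X)) x * a (n+3) x
      + 2*(2*((n:ℝ)+3)*((n:ℝ)+2)*((n:ℝ)+1) + 6*lam*((n:ℝ)+3)*((n:ℝ)+2))
        * deriv (deriv X) x * deriv (a (n+3)) x
      + (-6*((n:ℝ)+2)*((n:ℝ)+1) - 12*lam*((n:ℝ)+2)) * deriv (deriv X) x * a (n+2) x) * hrel
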